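/- For every ecumenical formula A and every eventually externally classical formula B^ec, the formula (A ∧ (A →c B^ec)) →i B^ec is provable in the ecumenical sequent calculus LE. -/
import Mathlib


namespace Ecumenical

/-! First-order ecumenical language (locally nameless: de Bruijn bound vars,
    named free vars) and the ecumenical sequent calculus LE. -/

inductive Tm where
  | bvar : Nat → Tm
  | fvar : Nat → Tm

/-- Replace the bound variable of index `k` by the free variable `y`. -/
def Tm.openT (k y : Nat) : Tm → Tm
  | .bvar n => if n = k then .fvar y else .bvar n
  | .fvar n => .fvar n

def Tm.fv : Tm → Finset Nat
  | .bvar _ => ∅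
  | .fvar n => {n}

/-- Ecumenical first-order formulas. `ati`/`atc` are intuitionistic/classical
    atomic predicates; quantifiers bind the de Bruijn index 0. -/
inductive Fm where
  | ati : Nat → List Tm → Fm
  | atc : Nat → List Tm → Fm
  | bot : Fm
  | neg : Fm → Fm
  | and : Fm → Fm → Fm
  | ori : Fm → Fm → Fm
  | orc : Fm → Fm → Fm
  | impi : Fm → Fm → Fm
  | impc : Fm → Fm → Fm
  | all : Fm → Fm
  | exi : Fm → Fm
  | exc : Fm → Fm

def Fm.openF (k y : Nat) : Fm → Fm
  | .ati p ts => .ati p (ts.map (Tm.openT k y))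
  | .atc p ts => .atc p (ts.map (Tm.openT k y))
  | .bot => .bot
  | .neg A => .neg (A.openF k y)
  | .and A B => .and (A.openF k y) (B.openF k y)
  | .ori A B => .ori (A.openF k y) (B.openF k y)
  | .orc A B => .orc (A.openF k y) (B.openF k y)
  | .impi A B => .impi (A.openF k y) (B.openF k y)
  | .impc A B => .impc (A.openF k y) (B.openF k y)
  | .all A => .all (A.openF (k+1) y)
  | .exi A => .exi (A.openF (k+1) y)
  | .exc A => .exc (A.openF (k+1) y)

/-- `A.inst y` is `A[y/x]`: the body of a quantifier instantiated with `y`. -/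
def Fm.inst (A : Fm) (y : Nat) : Fm := A.openF 0 y

def Fm.fv : Fm → Finset Nat
  | .ati _ ts => ts.foldr (fun t s => t.fv ∪ s) ∅
  | .atc _ ts => ts.foldr (fun t s => t.fv ∪ s) ∅
  | .bot => ∅
  | .neg A => A.fv
  | .and A B => A.fv ∪ B.fv
  | .ori A B => A.fv ∪ B.fv
  | .orc A B => A.fv ∪ B.fv
  | .impi A B => A.fv ∪ B.fv
  | .impc A B => A.fv ∪ B.fv
  | .all A => A.fv
  | .exi A => A.fv
  | .exc A => A.fv

/-- `y` is fresh for every formula in the context `Γ`. -/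
def FreshIn (y : Nat) (Γ : Multiset Fm) : Prop := ∀ B ∈ Γ, y ∉ B.fv

/-- Intuitionistic bi-implication `A ↔i B`. -/
def Fm.iffi (A B : Fm) : Fm := .and (.impi A B) (.impi B A)

/-- The ecumenical sequent calculus LE, with single-succedent sequents `Γ ⊢ C`. -/
inductive LE : Multiset Fm → Fm → Prop where
  | init (p ts Γ) : LE (Fm.ati p ts ::ₘ Γ) (Fm.ati p ts)
  | botL (Γ A) : LE (Fm.bot ::ₘ Γ) A
  | cut {Γ A C} : LE Γ A → LE (A ::ₘ Γ) C → LE Γ C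
  | wk {Γ} (A) : LE Γ Fm.bot → LE Γ A
  | andL {Γ A B C} : LE (A ::ₘ B ::ₘ Γ) C → LE (Fm.and A B ::ₘ Γ) C
  | andR {Γ A B} : LE Γ A → LE Γ B → LE Γ (Fm.and A B)
  | oriL {Γ A B C} : LE (A ::ₘ Γ) C → LE (B ::ₘ Γ) C → LE (Fm.ori A B ::ₘ Γ) C
  | oriR1 {Γ A} (B) : LE Γ A → LE Γ (Fm.ori A B)
  | oriR2 {Γ B} (A) : LE Γ B → LE Γ (Fm.ori A B)
  | impiL {Γ A B C} : LE (Fm.impi A B ::ₘ Γ) A → LE (B ::ₘ Γ) C →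
      LE (Fm.impi A B ::ₘ Γ) C
  | impiR {Γ A B} : LE (A ::ₘ Γ) B → LE Γ (Fm.impi A B)
  | negL {Γ A} : LE (Fm.neg A ::ₘ Γ) A → LE (Fm.neg A ::ₘ Γ) Fm.bot
  | negR {Γ A} : LE (A ::ₘ Γ) Fm.bot → LE Γ (Fm.neg A)
  | allL {Γ A C} (y) : LE (A.inst y ::ₘ Fm.all A ::ₘ Γ) C → LE (Fm.all A ::ₘ Γ) C
  | allR {Γ A} (y) : y ∉ A.fv → FreshIn y Γ → LE Γ (A.inst y) → LE Γ (Fm.all A)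
  | exiL {Γ A C} (y) : y ∉ A.fv → FreshIn y Γ → y ∉ C.fv →
      LE (A.inst y ::ₘ Γ) C → LE (Fm.exi A ::ₘ Γ) C
  | exiR {Γ A} (y) : LE Γ (A.inst y) → LE Γ (Fm.exi A)
  | orcR {Γ A B} : LE (Fm.neg A ::ₘ Fm.neg B ::ₘ Γ) Fm.bot → LE Γ (Fm.orc A B)
  | impcR {Γ A B} : LE (A ::ₘ Fm.neg B ::ₘ Γ) Fm.bot → LE Γ (Fm.impc A B)
  | excR {Γ A} : LE (Fm.all (Fm.neg A) ::ₘ Γ) Fm.bot → LE Γ (Fm.exc A)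
  | Rc {Γ p ts} : LE (Fm.neg (Fm.ati p ts) ::ₘ Γ) Fm.bot → LE Γ (Fm.atc p ts)
  | orcL {Γ A B} : LE (A ::ₘ Γ) Fm.bot → LE (B ::ₘ Γ) Fm.bot →
      LE (Fm.orc A B ::ₘ Γ) Fm.bot
  | impcL {Γ A B} : LE (Fm.impc A B ::ₘ Γ) A → LE (B ::ₘ Γ) Fm.bot →
      LE (Fm.impc A B ::ₘ Γ) Fm.bot
  | excL {Γ A} (y) : y ∉ A.fv → FreshIn y Γ →
      LE (A.inst y ::ₘ Γ) Fm.bot → LE (Fm.exc A ::ₘ Γ) Fm.bot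
  | Lc {Γ p ts} : LE (Fm.ati p ts ::ₘ Γ) Fm.bot → LE (Fm.atc p ts ::ₘ Γ) Fm.bot


/-- Externally classical formulas: `A^c ::= p_c | ⊥ | A ∨c A | A →c A | ∃c x.A`. -/
inductive IsEC : Fm → Prop where
  | atc (p ts) : IsEC (.atc p ts)
  | bot : IsEC .bot
  | orc (A B) : IsEC (.orc A B)
  | impc (A B) : IsEC (.impc A B)
  | exc (A) : IsEC (.exc A)

/-- Eventually externally classical formulas:
    `A^ec ::= A^c | A^ec ∧ A^ec | ∀x.A^ec | A →i A^ec | ¬A`. -/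
inductive IsEEC : Fm → Prop where
  | ec {A} : IsEC A → IsEEC A
  | and {A B} : IsEEC A → IsEEC B → IsEEC (.and A B)
  | all {A} : IsEEC A → IsEEC (.all A)
  | impi {B} (A) : IsEEC B → IsEEC (.impi A B)
  | neg (A) : IsEEC (.neg A)

/-! ### Auxiliary machinery -/

deriving instance DecidableEq for Tm
deriving instance DecidableEq for Fm

def Fm.size : Fm → Nat
  | .ati _ _ => 1
  | .atc _ _ => 1
  | .bot => 1
  | .neg A => A.size + 1
  | .and A B => A.size + B.size + 1
  | .ori A B => A.size + B.size + 1
  | .orc A B => A.size + B.size + 1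
  | .impi A B => A.size + B.size + 1
  | .impc A B => A.size + B.size + 1
  | .all A => A.size + 1
  | .exi A => A.size + 1
  | .exc A => A.size + 1

theorem Fm.size_openF (A : Fm) : ∀ k y, (A.openF k y).size = A.size := by
  induction A <;> intro k y <;> simp [Fm.openF, Fm.size, *]

theorem Fm.size_inst (A : Fm) (y : Nat) : (A.inst y).size = A.size :=
  A.size_openF 0 y

def ctxFv (Γ : Multiset Fm) : Finset Nat := (Γ.map Fm.fv).sup

theorem freshIn_of {y : Nat} {Γ : Multiset Fm} (h : y ∉ ctxFv Γ) : FreshIn y Γ := by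
  intro B hB hy
  have hle : B.fv ≤ ctxFv Γ := Multiset.le_sup (Multiset.mem_map_of_mem _ hB)
  exact h (Finset.mem_of_subset hle hy)

theorem exists_fresh (s : Finset Nat) (Γ : Multiset Fm) :
    ∃ y, y ∉ s ∧ FreshIn y Γ := by
  obtain ⟨y, hy⟩ := Infinite.exists_notMem_finset (s ∪ ctxFv Γ)
  simp only [Finset.mem_union, not_or] at hy
  exact ⟨y, hy.1, freshIn_of hy.2⟩

theorem memTail {x a : Fm} {Γ : Multiset Fm} (h : x ∈ a ::ₘ Γ) (ne : x ≠ a) :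
    x ∈ Γ := (Multiset.mem_cons.1 h).resolve_left ne

/-- `negL` with the principal formula anywhere in the context. -/
theorem LE.negL' {Γ : Multiset Fm} {A} (h : Fm.neg A ∈ Γ) (d : LE Γ A) :
    LE Γ Fm.bot := by
  rw [← Multiset.cons_erase h] at d ⊢
  exact LE.negL d

/-- A clash between `¬A` and `A` in the context, given identity for `A`. -/
theorem LE.clash {Γ : Multiset Fm} {A} (h1 : Fm.neg A ∈ Γ) (h2 : A ∈ Γ)
    (dA : ∀ Γ', A ∈ Γ' → LE Γ' A) : LE Γ Fm.bot :=
  LE.negL' h1 (dA _ h2)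

/-- `allL` with the principal formula anywhere in the context. -/
theorem LE.allL' {Γ : Multiset Fm} {A C} (y : Nat) (h : Fm.all A ∈ Γ)
    (d : LE (A.inst y ::ₘ Γ) C) : LE Γ C := by
  rw [← Multiset.cons_erase h] at d ⊢
  exact LE.allL y d

/-- `andL` with the principal formula anywhere in the context. -/
theorem LE.andL' {Γ : Multiset Fm} {A B C} (h : Fm.and A B ∈ Γ)
    (d : LE (A ::ₘ B ::ₘ Γ.erase (Fm.and A B)) C) : LE Γ C := by
  rw [← Multiset.cons_erase h]
  exact LE.andL d

/-- `impiL` with the principal formula anywhere in the context. -/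
theorem LE.impiL' {Γ : Multiset Fm} {A B C} (h : Fm.impi A B ∈ Γ)
    (d1 : LE Γ A) (d2 : LE (B ::ₘ Γ.erase (Fm.impi A B)) C) : LE Γ C := by
  rw [← Multiset.cons_erase h] at d1 ⊢
  exact LE.impiL d1 d2

theorem LE.impcClash {Γ : Multiset Fm} {A B} (h1 : Fm.impc A B ∈ Γ)
    (h2 : A ∈ Γ) (h3 : Fm.neg B ∈ Γ)
    (dA : ∀ Γ', A ∈ Γ' → LE Γ' A) (dB : ∀ Γ', B ∈ Γ' → LE Γ' B) :
    LE Γ Fm.bot := by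
  rw [← Multiset.cons_erase h1] at h2 h3 ⊢
  apply LE.impcL (dA _ h2)
  exact LE.clash (Multiset.mem_cons_of_mem (memTail h3 (by simp)))
    (Multiset.mem_cons_self _ _) dB

theorem LE.impiClash {Γ : Multiset Fm} {A B} (h1 : Fm.impi A B ∈ Γ)
    (h2 : A ∈ Γ) (h3 : Fm.neg B ∈ Γ)
    (dA : ∀ Γ', A ∈ Γ' → LE Γ' A) (dB : ∀ Γ', B ∈ Γ' → LE Γ' B) :
    LE Γ Fm.bot := by
  apply LE.impiL' h1 (dA _ h2)
  exact LE.clash (Multiset.mem_cons_of_mem ((Multiset.mem_erase_of_ne (by simp)).2 h3))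
    (Multiset.mem_cons_self _ _) dB

theorem LE.orcClash {Γ : Multiset Fm} {A B} (h1 : Fm.orc A B ∈ Γ)
    (h2 : Fm.neg A ∈ Γ) (h3 : Fm.neg B ∈ Γ)
    (dA : ∀ Γ', A ∈ Γ' → LE Γ' A) (dB : ∀ Γ', B ∈ Γ' → LE Γ' B) :
    LE Γ Fm.bot := by
  rw [← Multiset.cons_erase h1] at h2 h3 ⊢
  apply LE.orcL
  · exact LE.clash (Multiset.mem_cons_of_mem (memTail h2 (by simp)))
      (Multiset.mem_cons_self _ _) dA
  · exact LE.clash (Multiset.mem_cons_of_mem (memTail h3 (by simp)))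
      (Multiset.mem_cons_self _ _) dB

theorem LE.LcClash {Γ : Multiset Fm} {p ts} (h1 : Fm.atc p ts ∈ Γ)
    (h2 : Fm.neg (Fm.ati p ts) ∈ Γ) : LE Γ Fm.bot := by
  rw [← Multiset.cons_erase h1] at h2 ⊢
  apply LE.Lc
  apply LE.negL' (Multiset.mem_cons_of_mem (memTail h2 (by simp)))
  exact LE.init p ts _

theorem LE.excAllClash {Γ : Multiset Fm} {A} (h1 : Fm.exc A ∈ Γ)
    (h2 : Fm.all (Fm.neg A) ∈ Γ)
    (dA : ∀ y Γ', A.inst y ∈ Γ' → LE Γ' (A.inst y)) : LE Γ Fm.bot := by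
  rw [← Multiset.cons_erase h1] at h2 ⊢
  obtain ⟨y, hy, hfr⟩ := exists_fresh A.fv (Γ.erase (Fm.exc A))
  apply LE.excL y hy hfr
  apply LE.allL' y (Multiset.mem_cons_of_mem (memTail h2 (by simp)))
  show LE (Fm.neg (A.inst y) ::ₘ _) Fm.bot
  exact LE.clash (Multiset.mem_cons_self _ _)
    (Multiset.mem_cons_of_mem (Multiset.mem_cons_self _ _)) (dA y)

/-- General identity: `A ∈ Γ → Γ ⊢ A` for every formula `A`. -/
theorem LE.ident : ∀ n (A : Fm), A.size ≤ n → ∀ Γ, A ∈ Γ → LE Γ A := by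
  intro n
  induction n with
  | zero => intro A h; cases A <;> simp [Fm.size] at h
  | succ n ih =>
    intro A h Γ hm
    rw [← Multiset.cons_erase hm]
    set Γ' := Γ.erase A with hΓ'
    clear_value Γ'
    clear hm hΓ' Γ
    cases A with
    | ati p ts => exact LE.init p ts Γ'
    | atc p ts =>
      apply LE.Rc
      exact LE.LcClash (p := p) (ts := ts) (by simp) (by simp)
    | bot => exact LE.botL Γ' _
    | neg A =>
      apply LE.negR
      exact LE.clash (A := A) (by simp) (by simp) (ih A (by simp [Fm.size] at h; omega))
    | and A B =>
      simp [Fm.size] at h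
      apply LE.andR
      · exact LE.andL' (A := A) (B := B) (by simp) (ih A (by omega) _ (by simp))
      · exact LE.andL' (A := A) (B := B) (by simp) (ih B (by omega) _ (by simp))
    | ori A B =>
      simp [Fm.size] at h
      apply LE.oriL
      · exact LE.oriR1 B (ih A (by omega) _ (by simp))
      · exact LE.oriR2 A (ih B (by omega) _ (by simp))
    | orc A B =>
      simp [Fm.size] at h
      apply LE.orcR
      exact LE.orcClash (A := A) (B := B) (by simp) (by simp) (by simp)
        (ih A (by omega)) (ih B (by omega))
    | impi A B =>
      simp [Fm.size] at h
      apply LE.impiR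
      exact LE.impiL' (A := A) (B := B) (by simp) (ih A (by omega) _ (by simp))
        (ih B (by omega) _ (by simp))
    | impc A B =>
      simp [Fm.size] at h
      apply LE.impcR
      exact LE.impcClash (A := A) (B := B) (by simp) (by simp) (by simp)
        (ih A (by omega)) (ih B (by omega))
    | all A =>
      simp [Fm.size] at h
      obtain ⟨y, hy, hfr⟩ := exists_fresh A.fv (Fm.all A ::ₘ Γ')
      apply LE.allR y hy hfr
      apply LE.allL' (A := A) y (by simp)
      exact ih (A.inst y) (by rw [Fm.size_inst]; omega) _ (by simp)
    | exi A =>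
      simp [Fm.size] at h
      obtain ⟨y, hy, hfr⟩ := exists_fresh A.fv Γ'
      apply LE.exiL y hy hfr (by simpa [Fm.fv] using hy)
      apply LE.exiR y
      exact ih (A.inst y) (by rw [Fm.size_inst]; omega) _ (by simp)
    | exc A =>
      simp [Fm.size] at h
      apply LE.excR
      exact LE.excAllClash (A := A) (by simp) (by simp)
        (fun y => ih (A.inst y) (by rw [Fm.size_inst]; omega))

theorem LE.identity {A : Fm} {Γ : Multiset Fm} (h : A ∈ Γ) : LE Γ A :=
  LE.ident A.size A le_rfl Γ h

theorem IsEC.openF {A : Fm} (h : IsEC A) (k y : Nat) : IsEC (A.openF k y) := by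
  cases h <;> simp [Fm.openF] <;> constructor

theorem IsEEC.openF {A : Fm} (h : IsEEC A) : ∀ k y, IsEEC (A.openF k y) := by
  induction h with
  | ec h => exact fun k y => .ec (h.openF k y)
  | and _ _ ihA ihB => exact fun k y => .and (ihA k y) (ihB k y)
  | all _ ih => exact fun k y => .all (ih (k+1) y)
  | impi A _ ih => exact fun k y => .impi _ (ih k y)
  | neg A => exact fun k y => .neg _

/-- Double-negation elimination for eventually externally classical formulas. -/
theorem LE.dne : ∀ n (B : Fm), B.size ≤ n → IsEEC B → ∀ Γ,
    LE (Fm.neg (Fm.neg B) ::ₘ Γ) B := by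
  intro n
  induction n with
  | zero => intro B h; cases B <;> simp [Fm.size] at h
  | succ n ih =>
    intro B h hB Γ
    cases hB with
    | ec hec =>
      cases hec with
      | atc p ts =>
        apply LE.Rc
        apply LE.negL' (A := Fm.neg (Fm.atc p ts)) (by simp)
        apply LE.negR
        exact LE.LcClash (p := p) (ts := ts) (by simp) (by simp)
      | bot =>
        apply LE.negL' (A := Fm.neg Fm.bot) (by simp)
        apply LE.negR
        exact LE.botL _ _
      | orc A B =>
        apply LE.orcR
        apply LE.negL' (A := Fm.neg (Fm.orc A B)) (by simp)
        apply LE.negR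
        exact LE.orcClash (A := A) (B := B) (by simp) (by simp) (by simp)
          (fun _ => LE.identity) (fun _ => LE.identity)
      | impc A B =>
        apply LE.impcR
        apply LE.negL' (A := Fm.neg (Fm.impc A B)) (by simp)
        apply LE.negR
        exact LE.impcClash (A := A) (B := B) (by simp) (by simp) (by simp)
          (fun _ => LE.identity) (fun _ => LE.identity)
      | exc A =>
        apply LE.excR
        apply LE.negL' (A := Fm.neg (Fm.exc A)) (by simp)
        apply LE.negR
        exact LE.excAllClash (A := A) (by simp) (by simp) (fun _ _ => LE.identity)
    | and hA hB' =>
      rename_i A B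
      simp [Fm.size] at h
      apply LE.andR
      · apply LE.cut (A := Fm.neg (Fm.neg A)) _ (ih A (by omega) hA _)
        apply LE.negR
        apply LE.negL' (A := Fm.neg (Fm.and A B)) (by simp)
        apply LE.negR
        apply LE.andL' (A := A) (B := B) (by simp)
        exact LE.clash (A := A) (Multiset.mem_cons_of_mem (Multiset.mem_cons_of_mem
            ((Multiset.mem_erase_of_ne (by simp)).2 (by simp))))
          (by simp) (fun _ => LE.identity)
      · apply LE.cut (A := Fm.neg (Fm.neg B)) _ (ih B (by omega) hB' _)
        apply LE.negR
        apply LE.negL' (A := Fm.neg (Fm.and A B)) (by simp)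
        apply LE.negR
        apply LE.andL' (A := A) (B := B) (by simp)
        exact LE.clash (A := B) (Multiset.mem_cons_of_mem (Multiset.mem_cons_of_mem
            ((Multiset.mem_erase_of_ne (by simp)).2 (by simp))))
          (by simp) (fun _ => LE.identity)
    | all hA =>
      rename_i A
      simp [Fm.size] at h
      obtain ⟨y, hy, hfr⟩ := exists_fresh A.fv (Fm.neg (Fm.neg (Fm.all A)) ::ₘ Γ)
      apply LE.allR y hy hfr
      apply LE.cut (A := Fm.neg (Fm.neg (A.inst y)))
        _ (ih (A.inst y) (by rw [Fm.size_inst]; omega) (hA.openF 0 y) _)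
      apply LE.negR
      apply LE.negL' (A := Fm.neg (Fm.all A)) (by simp)
      apply LE.negR
      apply LE.allL' (A := A) y (by simp)
      exact LE.clash (A := A.inst y) (by simp) (by simp) (fun _ => LE.identity)
    | impi A hB' =>
      rename_i B
      simp [Fm.size] at h
      apply LE.impiR
      apply LE.cut (A := Fm.neg (Fm.neg B)) _ (ih B (by omega) hB' _)
      apply LE.negR
      apply LE.negL' (A := Fm.neg (Fm.impi A B)) (by simp)
      apply LE.negR
      exact LE.impiClash (A := A) (B := B) (by simp) (by simp) (by simp)
        (fun _ => LE.identity) (fun _ => LE.identity)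
    | neg A =>
      apply LE.negR
      apply LE.negL' (A := Fm.neg (Fm.neg A)) (by simp)
      apply LE.negR
      exact LE.clash (A := A) (by simp) (by simp) (fun _ => LE.identity)


/-- For every ecumenical formula A and eventually externally classical B,
    `⊢_LE (A ∧ (A →c B)) →i B`. -/
theorem LE_classical_mp_eec (A B : Fm) (hB : IsEEC B) :
    LE 0 (Fm.impi (.and A (.impc A B)) B) := by
  apply LE.impiR
  apply LE.andL
  apply LE.cut (A := Fm.neg (Fm.neg B)) _ (LE.dne B.size B le_rfl hB _)
  apply LE.negR
  exact LE.impcClash (A := A) (B := B) (by simp) (by simp) (by simp)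
    (fun _ => LE.identity) (fun _ => LE.identity)

end Ecumenical
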